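/- Let d ≥ 3, m ≥ 1, ω ∈ Ω_{d,m}, and ξ, η ∈ X^ℕ with ξ ∼ η. Then φ_{ξ,η} : (Γ_ξ, ξ) → (Γ_η, η) is an isomorphism of rooted, undirected, unlabeled graphs. -/
import Mathlib


open MeasureTheory

noncomputable section

/-- The boundary of the `d`-regular rooted tree: infinite words over `X = {0,…,d-1}`,
identified with `ZMod d`. -/
abbrev Bd (d : ℕ) : Type := ℕ → ZMod d
/-- The rooted automorphism `a`: adds 1 (mod `d`) to the first letter. -/
def aMap (d : ℕ) (ξ : Bd d) : Bd d := fun n => if n = 0 then ξ 0 + 1 else ξ n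

open scoped Classical in
/-- The spinal automorphism `b_ω`: if `ξ` starts with `(d-1)^r 0`, add `ω r b` to the
letter at position `r + 1`; otherwise fix `ξ`. -/
def bMap (d m : ℕ) (ω : ℕ → ((Fin m → ZMod d) →+ ZMod d)) (b : Fin m → ZMod d)
    (ξ : Bd d) : Bd d := fun n =>
  if n ≠ 0 ∧ (∀ i, i < n - 1 → ξ i = (d : ZMod d) - 1) ∧ ξ (n - 1) = 0 then
    ξ n + ω (n - 1) b
  else ξ n
/-- The spinal generating set `S = {a^j : 1 ≤ j ≤ d-1} ∪ {b_ω : b ∈ B ∖ {0}}`,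
as a set of self-maps of the boundary. -/
def genSet (d m : ℕ) (ω : ℕ → ((Fin m → ZMod d) →+ ZMod d)) : Set (Bd d → Bd d) :=
  {f | ∃ j, 1 ≤ j ∧ j ≤ d - 1 ∧ f = (aMap d)^[j]} ∪ {f | ∃ b, b ≠ 0 ∧ f = bMap d m ω b}
/-- Membership in `Ω_{d,m}`: all `ω_n` are surjective and `⋂_{j ≥ i} ker ω_j = {0}`
for every `i ≥ 0`. -/
def InOmega (d m : ℕ) (ω : ℕ → ((Fin m → ZMod d) →+ ZMod d)) : Prop :=
  (∀ n, Function.Surjective (ω n)) ∧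
  ∀ i : ℕ, ∀ b : Fin m → ZMod d, (∀ j, i ≤ j → ω j b = 0) → b = 0
/-- Two boundary points are cofinal if they agree at all sufficiently large positions. -/
def Cofinal {d : ℕ} (ξ η : Bd d) : Prop := ∃ N, ∀ n, N ≤ n → ξ n = η n

/-- The cofinality class of `ξ`. -/
def Cof {d : ℕ} (ξ : Bd d) : Set (Bd d) := {η | Cofinal ξ η}

theorem self_mem_Cof {d : ℕ} (ξ : Bd d) : ξ ∈ Cof ξ := ⟨0, fun _ _ => rfl⟩
/-- Edge multiplicity in the Schreier graph `Γ_ξ`: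
`mult(u, v) = card {s ∈ S : s · u = v}`. -/
def mult (d m : ℕ) (ω : ℕ → ((Fin m → ZMod d) →+ ZMod d)) (u v : Bd d) : ℕ :=
  Nat.card {f : Bd d → Bd d // f ∈ genSet d m ω ∧ f u = v}
/-- `ξ` has at least `r` consecutive letters `d-1` immediately before position `p`
(i.e. the block of `ξ` preceding position `p` ends in `(d-1)^r`). -/
def EndsIn (d : ℕ) (ξ : Bd d) (p r : ℕ) : Prop :=
  r ≤ p ∧ ∀ i, p - r ≤ i → i < p → ξ i = (d : ZMod d) - 1

/-- Compatibility `ξ ∼ η`: zeros at exactly the same positions, and before each zero the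
maximal runs of the letter `d-1` have the same length (equivalently, the corresponding
finite blocks end in `(d-1)^r` for exactly the same `r`'s). -/
def Compatible (d : ℕ) (ξ η : Bd d) : Prop :=
  (∀ n, ξ n = 0 ↔ η n = 0) ∧
  ∀ p, ξ p = 0 → ∀ r, (EndsIn d ξ p r ↔ EndsIn d η p r)
/-- `R_{ξ,ξ'} = min {s ≥ 0 : σ^s ξ = σ^s ξ'}` (with `R_{ξ,ξ} = 0`). -/
def Rdist {d : ℕ} (ξ ξ' : Bd d) : ℕ := sInf {s | ∀ n, s ≤ n → ξ n = ξ' n}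

open scoped Classical in
/-- The map `φ_{ξ,η}` sending `ξ ↦ η` and, for `ξ' ≠ ξ` with `R = R_{ξ,ξ'}`,
`ξ' ↦ ξ'_0 ⋯ ξ'_{R-2} τ_{R-1}(ξ'_{R-1}) η_R η_{R+1} ⋯`, where `τ_n` is the
transposition of `ξ_n` and `η_n`. -/
def phiMap (d : ℕ) (ξ η ξ' : Bd d) : Bd d :=
  if ξ' = ξ then η
  else fun n =>
    if n < Rdist ξ ξ' - 1 then ξ' n
    else if n = Rdist ξ ξ' - 1 then Equiv.swap (ξ n) (η n) (ξ' n)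
    else η n

section Aux

variable {d m : ℕ}

lemma dm1_ne_zero (hd : 3 ≤ d) : ((d : ZMod d) - 1) ≠ 0 := by
  haveI : NeZero d := ⟨by omega⟩
  haveI : Fact (1 < d) := ⟨by omega⟩
  rw [ZMod.natCast_self, zero_sub]
  exact neg_ne_zero.mpr one_ne_zero

lemma natCast_zmod_ne_zero (hd : 3 ≤ d) {j : ℕ} (h1 : 1 ≤ j) (h2 : j ≤ d - 1) :
    (j : ZMod d) ≠ 0 := by
  haveI : NeZero d := ⟨by omega⟩
  intro h
  have hv : ((j : ZMod d)).val = j := ZMod.val_cast_of_lt (by omega)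
  rw [h, ZMod.val_zero] at hv
  omega

lemma aMap_iterate (j : ℕ) (ξ : Bd d) (n : ℕ) :
    (aMap d)^[j] ξ n = if n = 0 then ξ 0 + (j : ZMod d) else ξ n := by
  induction j generalizing ξ with
  | zero =>
      rcases eq_or_ne n 0 with rfl | h
      · simp
      · simp [h]
  | succ j ih =>
      rw [Function.iterate_succ_apply, ih]
      rcases eq_or_ne n 0 with h | h
      · subst h
        simp only [if_pos rfl, aMap]
        push_cast
        ring
      · simp only [if_neg h, aMap]

/-- `u` starts with `(d-1)^r 0`. -/
def ActiveAt (d : ℕ) (u : Bd d) (r : ℕ) : Prop :=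
  (∀ i, i < r → u i = (d : ZMod d) - 1) ∧ u r = 0

lemma bMap_apply_active {ω : ℕ → ((Fin m → ZMod d) →+ ZMod d)} (hd : 3 ≤ d)
    {u : Bd d} {r : ℕ} (h : ActiveAt d u r) (b : Fin m → ZMod d) (n : ℕ) :
    bMap d m ω b u n = if n = r + 1 then u n + ω r b else u n := by
  classical
  by_cases hn : n = r + 1
  · subst hn
    rw [if_pos rfl]
    show (if _ then _ else _) = _
    have hcond : (r + 1 ≠ 0) ∧ (∀ i, i < r + 1 - 1 → u i = (d : ZMod d) - 1) ∧
        u (r + 1 - 1) = 0 := ⟨by omega, by simpa using h.1, by simpa using h.2⟩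
    rw [if_pos hcond]
    norm_num
  · rw [if_neg hn]
    show (if _ then _ else _) = _
    rw [if_neg]
    rintro ⟨h0, h1, h2⟩
    rcases lt_trichotomy (n - 1) r with hlt | heq | hgt
    · exact dm1_ne_zero hd (by rw [← h.1 _ hlt, h2])
    · omega
    · exact dm1_ne_zero hd (by rw [← h1 r hgt, h.2])

lemma bMap_apply_inactive {ω : ℕ → ((Fin m → ZMod d) →+ ZMod d)}
    {u : Bd d} (h : ∀ r, ¬ ActiveAt d u r) (b : Fin m → ZMod d) :
    bMap d m ω b u = u := by
  classical
  funext n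
  show (if _ then _ else _) = _
  rw [if_neg]
  rintro ⟨h0, h1, h2⟩
  exact h (n - 1) ⟨h1, h2⟩

lemma bMap_apply_zero {ω : ℕ → ((Fin m → ZMod d) →+ ZMod d)}
    (b : Fin m → ZMod d) (ξ : Bd d) : bMap d m ω b ξ 0 = ξ 0 := by
  classical
  show (if _ then _ else _) = _
  rw [if_neg]
  rintro ⟨h0, -⟩
  exact h0 rfl

lemma bMap_injective {ω : ℕ → ((Fin m → ZMod d) →+ ZMod d)} (hω : InOmega d m ω) :
    Function.Injective (bMap d m ω) := by
  classical
  intro b b' h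
  have key : ∀ r, ω r b = ω r b' := by
    intro r
    set ζ : Bd d := fun i => if i < r then (d : ZMod d) - 1 else 0 with hζ
    have hact : ActiveAt d ζ r := ⟨fun i hi => by simp [hζ, hi], by simp [hζ]⟩
    have h1 := congrFun (congrFun h ζ) (r + 1)
    have e : ∀ c : Fin m → ZMod d, bMap d m ω c ζ (r+1) = ζ (r+1) + ω r c := by
      intro c
      show (if _ then _ else _) = _
      have hcond : (r + 1 ≠ 0) ∧ (∀ i, i < r + 1 - 1 → ζ i = (d : ZMod d) - 1) ∧
          ζ (r + 1 - 1) = 0 := ⟨by omega, by simpa using hact.1, by simpa using hact.2⟩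
      rw [if_pos hcond]
      norm_num
    rw [e b, e b'] at h1
    exact add_left_cancel h1
  have := hω.2 0 (b - b') (fun j _ => by rw [map_sub, key j, sub_self])
  exact sub_eq_zero.mp this

end Aux
section Aux2

variable {d m : ℕ}

lemma Rdist_spec {ξ u : Bd d} (h : Cofinal ξ u) :
    ∀ n, Rdist ξ u ≤ n → ξ n = u n := by
  obtain ⟨N, hN⟩ := h
  exact Nat.sInf_mem (⟨N, hN⟩ : Set.Nonempty {s | ∀ n, s ≤ n → ξ n = u n})

lemma Rdist_le {ξ u : Bd d} {s : ℕ} (h : ∀ n, s ≤ n → ξ n = u n) : Rdist ξ u ≤ s :=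
  Nat.sInf_le h

lemma Rdist_self (ξ : Bd d) : Rdist ξ ξ = 0 :=
  Nat.le_zero.mp (Rdist_le fun _ _ => rfl)

lemma Rdist_pos {ξ u : Bd d} (h : Cofinal ξ u) (hne : u ≠ ξ) : 1 ≤ Rdist ξ u := by
  by_contra h0
  push_neg at h0
  exact hne (funext fun n => (Rdist_spec h n (by omega)).symm)

lemma Rdist_last {ξ u : Bd d} (h : Cofinal ξ u) (hne : u ≠ ξ) :
    ξ (Rdist ξ u - 1) ≠ u (Rdist ξ u - 1) := by
  intro heq
  have h1 := Rdist_pos h hne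
  have h2 : Rdist ξ u ≤ Rdist ξ u - 1 := Rdist_le (by
    intro n hn
    rcases eq_or_lt_of_le hn with h' | h'
    · rw [← h']; exact heq
    · exact Rdist_spec h n (by omega))
  omega

lemma Rdist_gt {ξ u : Bd d} (h : Cofinal ξ u) {t : ℕ} (hne : ξ t ≠ u t) :
    t < Rdist ξ u := by
  by_contra hc
  exact hne (Rdist_spec h t (by omega))

lemma Rdist_eq {ξ u : Bd d} {s : ℕ} (hs : 1 ≤ s) (h1 : ∀ n, s ≤ n → ξ n = u n)
    (h2 : ξ (s - 1) ≠ u (s - 1)) : Rdist ξ u = s := by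
  have hle := Rdist_le h1
  have hgt := Rdist_gt ⟨s, h1⟩ h2
  omega

lemma phi_root (ξ η : Bd d) : phiMap d ξ η ξ = η := by
  rw [phiMap, if_pos rfl]

lemma phi_apply_lt {ξ η u : Bd d} (hne : u ≠ ξ) {n : ℕ} (hn : n < Rdist ξ u - 1) :
    phiMap d ξ η u n = u n := by
  rw [phiMap, if_neg hne]
  exact if_pos hn

lemma phi_apply_last {ξ η u : Bd d} (hne : u ≠ ξ) :
    phiMap d ξ η u (Rdist ξ u - 1) =
      Equiv.swap (ξ (Rdist ξ u - 1)) (η (Rdist ξ u - 1)) (u (Rdist ξ u - 1)) := by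
  rw [phiMap, if_neg hne]
  show (if _ then _ else _) = _
  rw [if_neg (by omega), if_pos rfl]

lemma phi_apply_ge {ξ η u : Bd d} (hne : u ≠ ξ) (hR : 1 ≤ Rdist ξ u) {n : ℕ}
    (hn : Rdist ξ u ≤ n) : phiMap d ξ η u n = η n := by
  rw [phiMap, if_neg hne]
  show (if _ then _ else _) = _
  rw [if_neg (by omega), if_neg (by omega)]

lemma phi_last_ne {ξ η u : Bd d} (h : Cofinal ξ u) (hne : u ≠ ξ) :
    phiMap d ξ η u (Rdist ξ u - 1) ≠ η (Rdist ξ u - 1) := by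
  rw [phi_apply_last hne]
  intro hc
  have h2 : Equiv.swap (ξ (Rdist ξ u - 1)) (η (Rdist ξ u - 1)) (u (Rdist ξ u - 1)) =
      Equiv.swap (ξ (Rdist ξ u - 1)) (η (Rdist ξ u - 1)) (ξ (Rdist ξ u - 1)) := by
    rw [Equiv.swap_apply_left]; exact hc
  exact (Rdist_last h hne) ((Equiv.swap _ _).injective h2).symm

lemma phi_ne_root {ξ η u : Bd d} (h : Cofinal ξ u) (hne : u ≠ ξ) :
    phiMap d ξ η u ≠ η :=
  fun hc => phi_last_ne h hne (congrFun hc _)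

lemma phi_cofinal {ξ η u : Bd d} (h : Cofinal ξ u) : Cofinal η (phiMap d ξ η u) := by
  rcases eq_or_ne u ξ with rfl | h'
  · rw [phi_root]; exact ⟨0, fun n _ => rfl⟩
  · exact ⟨Rdist ξ u, fun n hn => (phi_apply_ge h' (Rdist_pos h h') hn).symm⟩

lemma Rdist_phi {ξ η u : Bd d} (h : Cofinal ξ u) (hne : u ≠ ξ) :
    Rdist η (phiMap d ξ η u) = Rdist ξ u :=
  Rdist_eq (Rdist_pos h hne)
    (fun n hn => (phi_apply_ge hne (Rdist_pos h hne) hn).symm)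
    (fun hc => phi_last_ne h hne hc.symm)

lemma phi_inverse {ξ η u : Bd d} (h : Cofinal ξ u) :
    phiMap d η ξ (phiMap d ξ η u) = u := by
  rcases eq_or_ne u ξ with rfl | h'
  · rw [phi_root, phi_root]
  · have hR := Rdist_pos h h'
    have hcof : Cofinal η (phiMap d ξ η u) := phi_cofinal h
    have hne2 : phiMap d ξ η u ≠ η := phi_ne_root h h'
    have hRd : Rdist η (phiMap d ξ η u) = Rdist ξ u := Rdist_phi h h'
    funext n
    rcases lt_trichotomy n (Rdist ξ u - 1) with hn | hn | hn
    · rw [phi_apply_lt hne2 (by rw [hRd]; exact hn), phi_apply_lt h' hn]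
    · have hn' : n = Rdist η (phiMap d ξ η u) - 1 := by rw [hRd]; exact hn
      rw [hn', phi_apply_last hne2, hRd, phi_apply_last h',
        Equiv.swap_comm (η _) (ξ _), Equiv.swap_apply_self]
    · rw [phi_apply_ge hne2 (by rw [hRd]; exact hR) (by rw [hRd]; omega)]
      exact Rdist_spec h n (by omega)

lemma Compatible.symm {ξ η : Bd d} (h : Compatible d ξ η) : Compatible d η ξ :=
  ⟨fun n => (h.1 n).symm, fun p hp r => (h.2 p ((h.1 p).mpr hp) r).symm⟩

lemma compat_prefix {ξ η : Bd d} (h : Compatible d ξ η) {r : ℕ} (ha : ActiveAt d ξ r) :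
    ∀ n, n ≤ r → η n = ξ n := by
  have h0 : η r = 0 := (h.1 r).mp ha.2
  have hE : EndsIn d η r r := (h.2 r ha.2 r).mp ⟨le_refl r, fun i _ h2 => ha.1 i h2⟩
  intro n hn
  rcases eq_or_lt_of_le hn with h' | h'
  · rw [h', h0, ha.2]
  · rw [hE.2 n (by omega) h', ha.1 n h']

lemma compat_run {ξ η : Bd d} (h : Compatible d ξ η) {s p : ℕ} (hsp : s ≤ p)
    (h0 : ξ p = 0) (hrun : ∀ i, s ≤ i → i < p → ξ i = (d : ZMod d) - 1)
    (hend : 1 ≤ s → ξ (s - 1) ≠ (d : ZMod d) - 1) :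
    η p = 0 ∧ (∀ i, s ≤ i → i < p → η i = (d : ZMod d) - 1) ∧
      (1 ≤ s → η (s - 1) ≠ (d : ZMod d) - 1) := by
  have h0' : η p = 0 := (h.1 p).mp h0
  have hE : EndsIn d η p (p - s) :=
    (h.2 p h0 (p - s)).mp ⟨by omega, fun i hi1 hi2 => hrun i (by omega) hi2⟩
  refine ⟨h0', fun i hi1 hi2 => hE.2 i (by omega) hi2, fun hs1 hc => ?_⟩
  have hnE : ¬ EndsIn d ξ p (p - s + 1) := by
    rintro ⟨hle, hrun'⟩
    exact hend hs1 (hrun' (s - 1) (by omega) (by omega))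
  apply hnE
  apply (h.2 p h0 (p - s + 1)).mpr
  refine ⟨by omega, fun i hi1 hi2 => ?_⟩
  rcases eq_or_lt_of_le hi1 with h' | h'
  · have : i = s - 1 := by omega
    rw [this]; exact hc
  · exact hE.2 i (by omega) hi2

end Aux2
section Aux3

variable {d m : ℕ}

lemma active_transfer (hd : 3 ≤ d) {ξ η u : Bd d} (hcomp : Compatible d ξ η)
    (hu : Cofinal ξ u) {r : ℕ} (ha : ActiveAt d u r) :
    ActiveAt d (phiMap d ξ η u) r := by
  rcases eq_or_ne u ξ with rfl | hne
  · rw [phi_root]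
    exact ⟨fun i hi => by rw [compat_prefix hcomp ha i (by omega)]; exact ha.1 i hi,
           by rw [compat_prefix hcomp ha r le_rfl]; exact ha.2⟩
  · have hR := Rdist_pos hu hne
    have hlast := Rdist_last hu hne
    have hspec := Rdist_spec hu
    rcases lt_trichotomy r (Rdist ξ u - 1) with hr | hr | hr
    · exact ⟨fun i hi => by rw [phi_apply_lt hne (by omega)]; exact ha.1 i hi,
             by rw [phi_apply_lt hne hr]; exact ha.2⟩
    · have hxr : ξ r ≠ 0 := by
        rw [← hr] at hlast
        rw [← ha.2]
        exact hlast
      have hyr : η r ≠ 0 := fun hc => hxr ((hcomp.1 r).mpr hc)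
      refine ⟨fun i hi => by rw [phi_apply_lt hne (by omega)]; exact ha.1 i hi, ?_⟩
      rw [hr, phi_apply_last hne, ← hr, ha.2]
      exact Equiv.swap_apply_of_ne_of_ne (Ne.symm hxr) (Ne.symm hyr)
    · have hr' : Rdist ξ u ≤ r := by omega
      have hur1 : u (Rdist ξ u - 1) = (d : ZMod d) - 1 := ha.1 _ (by omega)
      have hx : ∀ i, Rdist ξ u ≤ i → i < r → ξ i = (d : ZMod d) - 1 := fun i hi1 hi2 => by
        rw [hspec i hi1]; exact ha.1 i hi2
      have hx0 : ξ r = 0 := by rw [hspec r hr']; exact ha.2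
      have hxend : ξ (Rdist ξ u - 1) ≠ (d : ZMod d) - 1 :=
        fun hc => hlast (hc.trans hur1.symm)
      obtain ⟨hy0, hyrun, hyend⟩ := compat_run hcomp hr' hx0 hx (fun _ => hxend)
      constructor
      · intro i hi
        rcases lt_trichotomy i (Rdist ξ u - 1) with h1 | h1 | h1
        · rw [phi_apply_lt hne h1]; exact ha.1 i hi
        · rw [h1, phi_apply_last hne, hur1]
          exact Equiv.swap_apply_of_ne_of_ne
            (fun hc => hxend hc.symm) (fun hc => hyend hR hc.symm)
        · rw [phi_apply_ge hne hR (by omega)]; exact hyrun i (by omega) hi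
      · rw [phi_apply_ge hne hR (by omega)]; exact hy0

lemma active_transfer_iff (hd : 3 ≤ d) {ξ η u : Bd d} (hcomp : Compatible d ξ η)
    (hu : Cofinal ξ u) (r : ℕ) :
    ActiveAt d u r ↔ ActiveAt d (phiMap d ξ η u) r := by
  refine ⟨active_transfer hd hcomp hu, fun h => ?_⟩
  have := active_transfer hd hcomp.symm (phi_cofinal hu) h
  rwa [phi_inverse hu] at this

lemma key_aux (hd : 3 ≤ d) {ξ η u v : Bd d} (hcomp : Compatible d ξ η)
    (hu : Cofinal ξ u) (hv : Cofinal ξ v) {p : ℕ}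
    (hRu : Rdist ξ u ≤ p) (hne : u p ≠ v p) (hagree : ∀ n, n ≠ p → u n = v n)
    (hpre : p = 0 ∨ (1 ≤ p ∧ (∀ i, i < p - 1 → u i = (d : ZMod d) - 1) ∧ u (p - 1) = 0)) :
    (∀ n, n ≠ p → phiMap d ξ η u n = phiMap d ξ η v n) ∧
      phiMap d ξ η u p ≠ phiMap d ξ η v p := by
  have hspecu := Rdist_spec hu
  have hup : u p = ξ p := (hspecu p hRu).symm
  have hvp : v p ≠ ξ p := by rw [← hup]; exact fun hc => hne hc.symm
  have hvne : v ≠ ξ := fun hc => hvp (by rw [hc])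
  have hRv : Rdist ξ v = p + 1 := by
    refine Rdist_eq (by omega) (fun n hn => by
      rw [hspecu n (by omega)]; exact hagree n (by omega)) ?_
    simpa using fun hc => hvp hc.symm
  have hφv_lt : ∀ n, n < p → phiMap d ξ η v n = v n := fun n hn =>
    phi_apply_lt hvne (by omega)
  have hφv_p : phiMap d ξ η v p = Equiv.swap (ξ p) (η p) (v p) := by
    have h := phi_apply_last (η := η) hvne
    rw [hRv] at h
    simpa using h
  have hφv_gt : ∀ n, p < n → phiMap d ξ η v n = η n := fun n hn =>
    phi_apply_ge hvne (by omega) (by omega)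
  have hφv_p_ne : phiMap d ξ η v p ≠ η p := by
    rw [hφv_p]
    intro hc
    exact hvp ((Equiv.swap _ _).injective (hc.trans (Equiv.swap_apply_left _ _).symm))
  rcases eq_or_ne u ξ with rfl | hune
  · rw [phi_root]
    have hηξ : ∀ n, n < p → η n = u n := by
      rcases hpre with h0 | ⟨hp1, hrun, hz⟩
      · omega
      · intro n hn
        exact compat_prefix hcomp ⟨hrun, hz⟩ n (by omega)
    constructor
    · intro n hn
      rcases lt_or_gt_of_ne hn with h' | h'
      · rw [hφv_lt n h', hηξ n h']
        exact hagree n hn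
      · rw [hφv_gt n h']
    · exact fun hc => hφv_p_ne hc.symm
  · have hRu1 : 1 ≤ Rdist ξ u := Rdist_pos hu hune
    have hlast := Rdist_last hu hune
    have hp1 : 1 ≤ p := by
      rcases Nat.eq_zero_or_pos p with rfl | h
      · exact absurd (funext fun n => (hspecu n (by omega)).symm) hune
      · exact h
    obtain ⟨-, hrun, hz⟩ := hpre.resolve_left (by omega)
    rcases eq_or_lt_of_le hRu with hRup | hRup
    · -- Rdist ξ u = p
      have hx : ξ (p - 1) ≠ 0 := by
        rw [← hz]
        intro hc
        exact hlast (by rw [hRup]; exact hc)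
      have hy : η (p - 1) ≠ 0 := fun hc => hx ((hcomp.1 (p - 1)).mpr hc)
      have hφu : ∀ n, n < p → phiMap d ξ η u n = u n := by
        intro n hn
        rcases lt_trichotomy n (Rdist ξ u - 1) with h1 | h1 | h1
        · exact phi_apply_lt hune h1
        · rw [h1, phi_apply_last hune, hRup]
          rw [show u (p-1) = 0 from hz]
          exact Equiv.swap_apply_of_ne_of_ne (Ne.symm hx) (Ne.symm hy)
        · omega
      have hφu_ge : ∀ n, p ≤ n → phiMap d ξ η u n = η n := fun n hn =>
        phi_apply_ge hune hRu1 (by omega)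
      constructor
      · intro n hn
        rcases lt_or_gt_of_ne hn with h' | h'
        · rw [hφu n h', hφv_lt n h']
          exact hagree n hn
        · rw [hφu_ge n (by omega), hφv_gt n h']
      · rw [hφu_ge p le_rfl]
        exact fun hc => hφv_p_ne hc.symm
    · -- Rdist ξ u < p
      have hur1 : u (Rdist ξ u - 1) = (d : ZMod d) - 1 := hrun _ (by omega)
      have hxend : ξ (Rdist ξ u - 1) ≠ (d : ZMod d) - 1 :=
        fun hc => hlast (hc.trans hur1.symm)
      have hxrun : ∀ i, Rdist ξ u ≤ i → i < p - 1 → ξ i = (d : ZMod d) - 1 :=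
        fun i hi1 hi2 => by rw [hspecu i hi1]; exact hrun i hi2
      have hx0 : ξ (p - 1) = 0 := by rw [hspecu (p - 1) (by omega)]; exact hz
      obtain ⟨hy0, hyrun, hyend⟩ := compat_run hcomp (by omega : Rdist ξ u ≤ p - 1)
        hx0 hxrun (fun _ => hxend)
      have hφu : ∀ n, n < Rdist ξ u → phiMap d ξ η u n = u n := by
        intro n hn
        rcases eq_or_lt_of_le (by omega : n ≤ Rdist ξ u - 1) with h1 | h1
        · rw [h1, phi_apply_last hune, hur1]
          exact Equiv.swap_apply_of_ne_of_ne
            (fun hc => hxend hc.symm) (fun hc => hyend hRu1 hc.symm)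
        · exact phi_apply_lt hune h1
      have hφu_ge : ∀ n, Rdist ξ u ≤ n → phiMap d ξ η u n = η n := fun n hn =>
        phi_apply_ge hune hRu1 hn
      constructor
      · intro n hn
        rcases lt_or_gt_of_ne hn with h' | h'
        · rcases lt_or_ge n (Rdist ξ u) with h2 | h2
          · rw [hφu n h2, hφv_lt n h']
            exact hagree n hn
          · rw [hφu_ge n h2, hφv_lt n h']
            rw [← hagree n hn, ← hspecu n h2]
            rcases eq_or_lt_of_le (by omega : n ≤ p - 1) with h3 | h3
            · rw [h3, hy0, hx0]
            · rw [hyrun n h2 (by omega), hxrun n h2 (by omega)]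
        · rw [hφu_ge n (by omega), hφv_gt n h']
      · rw [hφu_ge p (by omega)]
        exact fun hc => hφv_p_ne hc.symm

lemma key (hd : 3 ≤ d) {ξ η u v : Bd d} (hcomp : Compatible d ξ η)
    (hu : Cofinal ξ u) (hv : Cofinal ξ v) {p : ℕ}
    (hne : u p ≠ v p) (hagree : ∀ n, n ≠ p → u n = v n)
    (hpre : p = 0 ∨ (1 ≤ p ∧ (∀ i, i < p - 1 → u i = (d : ZMod d) - 1) ∧ u (p - 1) = 0)) :
    (∀ n, n ≠ p → phiMap d ξ η u n = phiMap d ξ η v n) ∧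
      phiMap d ξ η u p ≠ phiMap d ξ η v p := by
  by_cases hRu : Rdist ξ u ≤ p
  · exact key_aux hd hcomp hu hv hRu hne hagree hpre
  · by_cases hRv : Rdist ξ v ≤ p
    · have hpre' : p = 0 ∨ (1 ≤ p ∧ (∀ i, i < p - 1 → v i = (d : ZMod d) - 1) ∧
          v (p - 1) = 0) := by
        rcases hpre with h | ⟨h1, h2, h3⟩
        · exact Or.inl h
        · exact Or.inr ⟨h1, fun i hi => by
            rw [← hagree i (by omega)]; exact h2 i hi,
            by rw [← hagree (p - 1) (by omega)]; exact h3⟩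
      have h := key_aux hd hcomp hv hu hRv (fun hc => hne hc.symm)
        (fun n hn => (hagree n hn).symm) hpre'
      exact ⟨fun n hn => (h.1 n hn).symm, fun hc => h.2 hc.symm⟩
    · push_neg at hRu hRv
      have hune : u ≠ ξ := by
        intro hc; rw [hc, Rdist_self] at hRu; omega
      have hvne : v ≠ ξ := by
        intro hc; rw [hc, Rdist_self] at hRv; omega
      have hlu := Rdist_last hu hune
      have hlv := Rdist_last hv hvne
      have hsu := Rdist_spec hu
      have hsv := Rdist_spec hv
      by_cases hR2 : p + 2 ≤ Rdist ξ u
      · have hvu : Rdist ξ u ≤ Rdist ξ v := by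
          have := Rdist_gt hv (t := Rdist ξ u - 1)
            (by rw [← hagree (Rdist ξ u - 1) (by omega)]; exact hlu)
          omega
        have huv : Rdist ξ v ≤ Rdist ξ u := by
          have := Rdist_gt hu (t := Rdist ξ v - 1)
            (by rw [hagree (Rdist ξ v - 1) (by omega)]; exact hlv)
          omega
        have hEq : Rdist ξ v = Rdist ξ u := le_antisymm huv hvu
        constructor
        · intro n hn
          rcases lt_trichotomy n (Rdist ξ u - 1) with h1 | h1 | h1
          · rw [phi_apply_lt hune h1, phi_apply_lt hvne (by omega)]
            exact hagree n hn
          · rw [h1, phi_apply_last hune, ← hEq, phi_apply_last hvne, hEq]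
            rw [hagree (Rdist ξ u - 1) (by omega)]
          · rw [phi_apply_ge hune (by omega) (by omega),
              phi_apply_ge hvne (by omega) (by omega)]
        · rw [phi_apply_lt hune (by omega), phi_apply_lt hvne (by omega)]
          exact hne
      · have hRu' : Rdist ξ u = p + 1 := by omega
        have hRv' : Rdist ξ v = p + 1 := by
          by_contra hc
          have hR2v : p + 2 ≤ Rdist ξ v := by omega
          have := Rdist_gt hu (t := Rdist ξ v - 1)
            (by rw [hagree (Rdist ξ v - 1) (by omega)]; exact hlv)
          omega
        constructor
        · intro n hn
          rcases lt_or_gt_of_ne hn with h1 | h1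
          · rw [phi_apply_lt hune (by omega), phi_apply_lt hvne (by omega)]
            exact hagree n hn
          · rw [phi_apply_ge hune (by omega) (by omega),
              phi_apply_ge hvne (by omega) (by omega)]
        · have h1 := phi_apply_last (η := η) hune
          have h2 := phi_apply_last (η := η) hvne
          rw [hRu'] at h1
          rw [hRv'] at h2
          simp only [Nat.add_sub_cancel] at h1 h2
          rw [h1, h2]
          exact fun hc => hne ((Equiv.swap _ _).injective hc)
end Aux3
section Aux4

variable {d m : ℕ}

lemma bMap_eq_iff {ω : ℕ → ((Fin m → ZMod d) →+ ZMod d)} (hd : 3 ≤ d)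
    {u v : Bd d} {r : ℕ} (ha : ActiveAt d u r) (b : Fin m → ZMod d) :
    bMap d m ω b u = v ↔
      ((∀ n, n ≠ r + 1 → u n = v n) ∧ ω r b = v (r + 1) - u (r + 1)) := by
  constructor
  · intro h
    constructor
    · intro n hn
      have h1 := congrFun h n
      rw [bMap_apply_active hd ha, if_neg hn] at h1
      exact h1
    · have h1 := congrFun h (r + 1)
      rw [bMap_apply_active hd ha, if_pos rfl] at h1
      rw [← h1]
      ring
  · rintro ⟨h1, h2⟩
    funext n
    rw [bMap_apply_active hd ha]
    by_cases hn : n = r + 1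
    · rw [if_pos hn, hn, h2]
      ring
    · rw [if_neg hn]
      exact h1 n hn

open scoped Classical in
lemma mult_eq {ω : ℕ → ((Fin m → ZMod d) →+ ZMod d)} (hd : 3 ≤ d)
    (hω : InOmega d m ω) (u v : Bd d) :
    mult d m ω u v =
      (if (∀ n, 1 ≤ n → u n = v n) ∧ u 0 ≠ v 0 then 1 else 0)
        + Nat.card {b : Fin m → ZMod d // b ≠ 0 ∧ bMap d m ω b u = v} := by
  classical
  haveI : NeZero d := ⟨by omega⟩
  set J : Set ℕ := {j | 1 ≤ j ∧ j ≤ d - 1 ∧ (aMap d)^[j] u = v} with hJdef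
  set Bs : Set (Fin m → ZMod d) := {b | b ≠ 0 ∧ bMap d m ω b u = v} with hBdef
  set T1 : Set (Bd d → Bd d) := (fun j => (aMap d)^[j]) '' J with hT1
  set T2 : Set (Bd d → Bd d) := (bMap d m ω) '' Bs with hT2
  have hT : {f | f ∈ genSet d m ω ∧ f u = v} = T1 ∪ T2 := by
    ext f
    simp only [hT1, hT2, hJdef, hBdef, genSet, Set.mem_union, Set.mem_setOf_eq,
      Set.mem_image, Set.mem_setOf_eq]
    constructor
    · rintro ⟨h1 | h2, hfv⟩
      · obtain ⟨j, hj1, hj2, rfl⟩ := h1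
        exact Or.inl ⟨j, ⟨hj1, hj2, hfv⟩, rfl⟩
      · obtain ⟨b, hb, rfl⟩ := h2
        exact Or.inr ⟨b, ⟨hb, hfv⟩, rfl⟩
    · rintro (⟨j, ⟨h1, h2, h3⟩, rfl⟩ | ⟨b, ⟨h1, h2⟩, rfl⟩)
      · exact ⟨Or.inl ⟨j, h1, h2, rfl⟩, h3⟩
      · exact ⟨Or.inr ⟨b, h1, rfl⟩, h2⟩
  have hfinJ : J.Finite := (Set.finite_Iic (d - 1)).subset (fun j hj => hj.2.1)
  have hfinB : Bs.Finite := Set.toFinite _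
  have hfin1 : T1.Finite := hfinJ.image _
  have hfin2 : T2.Finite := hfinB.image _
  have hdisj : Disjoint T1 T2 := by
    rw [Set.disjoint_left]
    rintro f ⟨j, ⟨hj1, hj2, -⟩, rfl⟩ ⟨b, -, hb⟩
    have h0 : bMap d m ω b (fun _ => (0 : ZMod d)) 0
        = (aMap d)^[j] (fun _ => (0 : ZMod d)) 0 := congrFun (congrFun hb _) 0
    rw [bMap_apply_zero, aMap_iterate, if_pos rfl, zero_add] at h0
    exact natCast_zmod_ne_zero hd hj1 hj2 h0.symm
  have hmult : mult d m ω u v = (T1 ∪ T2).ncard := by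
    rw [← hT, ← Nat.card_coe_set_eq]
    rfl
  have hcard1 : T1.ncard = J.ncard := by
    apply Set.ncard_image_of_injOn
    intro j hj j' hj' hjj
    have h : (aMap d)^[j] (fun _ => (0 : ZMod d)) 0
        = (aMap d)^[j'] (fun _ => (0 : ZMod d)) 0 := congrFun (congrFun hjj _) 0
    rw [aMap_iterate, aMap_iterate, if_pos rfl, if_pos rfl, zero_add, zero_add] at h
    have h1 : ((j : ZMod d)).val = j := ZMod.val_cast_of_lt (by
      have := hj.2.1; omega)
    have h2 : ((j' : ZMod d)).val = j' := ZMod.val_cast_of_lt (by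
      have := hj'.2.1; omega)
    rw [h] at h1
    omega
  have hcard2 : T2.ncard = Bs.ncard :=
    Set.ncard_image_of_injOn ((bMap_injective hω).injOn)
  have hJcard : J.ncard = if (∀ n, 1 ≤ n → u n = v n) ∧ u 0 ≠ v 0 then 1 else 0 := by
    split_ifs with hc
    · have hvu : v 0 - u 0 ≠ 0 := sub_ne_zero.mpr (Ne.symm hc.2)
      have hval1 : 1 ≤ (v 0 - u 0).val := by
        rcases Nat.eq_zero_or_pos (v 0 - u 0).val with h | h
        · exact absurd ((ZMod.val_eq_zero _).mp h) hvu
        · exact h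
      have hvlt : (v 0 - u 0).val < d := ZMod.val_lt _
      have hJs : J = {(v 0 - u 0).val} := by
        ext j
        simp only [hJdef, Set.mem_setOf_eq, Set.mem_singleton_iff]
        constructor
        · rintro ⟨h1, h2, h3⟩
          have h4 := congrFun h3 0
          rw [aMap_iterate, if_pos rfl] at h4
          have hval : ((j : ZMod d)).val = j := ZMod.val_cast_of_lt (by omega)
          rw [show (j : ZMod d) = v 0 - u 0 from by rw [← h4]; ring] at hval
          exact hval.symm
        · rintro rfl
          refine ⟨hval1, by omega, ?_⟩
          funext n
          rw [aMap_iterate]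
          rcases eq_or_ne n 0 with rfl | hn
          · rw [if_pos rfl, ZMod.natCast_val, ZMod.cast_id]
            ring
          · rw [if_neg hn]
            exact hc.1 n (by omega)
      rw [hJs, Set.ncard_singleton]
    · have hJs : J = ∅ := by
        ext j
        simp only [hJdef, Set.mem_setOf_eq, Set.mem_empty_iff_false, iff_false]
        rintro ⟨h1, h2, h3⟩
        apply hc
        constructor
        · intro n hn
          have h4 := congrFun h3 n
          rw [aMap_iterate, if_neg (by omega)] at h4
          exact h4
        · have h4 := congrFun h3 0
          rw [aMap_iterate, if_pos rfl] at h4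
          intro huv
          rw [huv] at h4
          exact natCast_zmod_ne_zero hd h1 h2 (by
            have : v 0 + (j : ZMod d) = v 0 + 0 := by rw [h4, add_zero]
            exact add_left_cancel this)
      rw [hJs, Set.ncard_empty]
  have hBcard : Bs.ncard = Nat.card {b : Fin m → ZMod d // b ≠ 0 ∧ bMap d m ω b u = v} :=
    (Nat.card_coe_set_eq _).symm
  rw [hmult, Set.ncard_union_eq hdisj hfin1 hfin2, hcard1, hcard2, hJcard, hBcard]

lemma fiber_card {ω : ℕ → ((Fin m → ZMod d) →+ ZMod d)} (hd : 3 ≤ d)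
    (hω : InOmega d m ω) (r r' : ℕ) (c c' : ZMod d) (hcc : (c = 0) ↔ (c' = 0)) :
    Nat.card {b : Fin m → ZMod d // b ≠ 0 ∧ ω r b = c}
      = Nat.card {b : Fin m → ZMod d // b ≠ 0 ∧ ω r' b = c'} := by
  classical
  haveI : NeZero d := ⟨by omega⟩
  have keq : ∀ s : ℕ, Nat.card {b : Fin m → ZMod d // ω s b = 0} * d
      = Nat.card (Fin m → ZMod d) := by
    intro s
    obtain ⟨b₁, hb₁⟩ := hω.1 s 1
    have e : ({b : Fin m → ZMod d // ω s b = 0} × ZMod d) ≃ (Fin m → ZMod d) :=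
      { toFun := fun x => x.1.1 + (x.2.val) • b₁
        invFun := fun b => ⟨⟨b - (ω s b).val • b₁, by
          rw [map_sub, map_nsmul, hb₁, nsmul_eq_mul, mul_one, ZMod.natCast_val,
            ZMod.cast_id, sub_self]⟩, ω s b⟩
        left_inv := fun x => by
          have hb : ω s (x.1.1 + x.2.val • b₁) = x.2 := by
            rw [map_add, x.1.2, map_nsmul, hb₁, nsmul_eq_mul, mul_one, zero_add,
              ZMod.natCast_val, ZMod.cast_id]
          rw [Prod.ext_iff]
          refine ⟨Subtype.ext ?_, hb⟩
          show x.1.1 + x.2.val • b₁ - (ω s (x.1.1 + x.2.val • b₁)).val • b₁ = x.1.1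
          rw [hb]
          simp
        right_inv := fun b => by simp }
    rw [← Nat.card_congr e, Nat.card_prod, Nat.card_zmod]
  have fib : ∀ (s : ℕ) (a : ZMod d), Nat.card {b : Fin m → ZMod d // ω s b = a}
      = Nat.card {b : Fin m → ZMod d // ω s b = 0} := by
    intro s a
    obtain ⟨b₀, hb₀⟩ := hω.1 s a
    refine Nat.card_congr (Equiv.subtypeEquiv (Equiv.subRight b₀) (fun b => ?_))
    simp only [Equiv.subRight_apply]
    rw [map_sub, hb₀, sub_eq_zero]
  have hker : Nat.card {b : Fin m → ZMod d // ω r b = 0}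
      = Nat.card {b : Fin m → ZMod d // ω r' b = 0} := by
    have := (keq r).trans (keq r').symm
    exact Nat.eq_of_mul_eq_mul_right (by omega) this
  by_cases h0 : c = 0
  · have h0' : c' = 0 := hcc.mp h0
    subst h0
    subst h0'
    have hdiff : ∀ s : ℕ, ({b : Fin m → ZMod d | b ≠ 0 ∧ ω s b = 0}).ncard
        = ({b : Fin m → ZMod d | ω s b = 0}).ncard - 1 := by
      intro s
      have hset : {b : Fin m → ZMod d | b ≠ 0 ∧ ω s b = 0}
          = {b : Fin m → ZMod d | ω s b = 0} \ {0} := by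
        ext b
        simp only [Set.mem_setOf_eq, Set.mem_diff, Set.mem_singleton_iff]
        tauto
      rw [hset, Set.ncard_diff_singleton_of_mem (by simp : (0 : Fin m → ZMod d) ∈ _)]
    calc Nat.card {b : Fin m → ZMod d // b ≠ 0 ∧ ω r b = 0}
        = ({b : Fin m → ZMod d | b ≠ 0 ∧ ω r b = 0}).ncard := Nat.card_coe_set_eq _
      _ = ({b : Fin m → ZMod d | ω r b = 0}).ncard - 1 := hdiff r
      _ = Nat.card {b : Fin m → ZMod d // ω r b = 0} - 1 :=
          congrArg (· - 1) (Nat.card_coe_set_eq _).symm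
      _ = Nat.card {b : Fin m → ZMod d // ω r' b = 0} - 1 := by rw [hker]
      _ = ({b : Fin m → ZMod d | ω r' b = 0}).ncard - 1 :=
          congrArg (· - 1) (Nat.card_coe_set_eq _)
      _ = ({b : Fin m → ZMod d | b ≠ 0 ∧ ω r' b = 0}).ncard := (hdiff r').symm
      _ = Nat.card {b : Fin m → ZMod d // b ≠ 0 ∧ ω r' b = 0} :=
          (Nat.card_coe_set_eq _).symm
  · have h0' : c' ≠ 0 := fun hc => h0 (hcc.mpr hc)
    have e1 : {b : Fin m → ZMod d // b ≠ 0 ∧ ω r b = c}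
        ≃ {b : Fin m → ZMod d // ω r b = c} :=
      Equiv.subtypeEquivRight (fun b => ⟨fun h => h.2, fun h =>
        ⟨fun hb => h0 (by rw [hb, map_zero] at h; exact h.symm), h⟩⟩)
    have e2 : {b : Fin m → ZMod d // b ≠ 0 ∧ ω r' b = c'}
        ≃ {b : Fin m → ZMod d // ω r' b = c'} :=
      Equiv.subtypeEquivRight (fun b => ⟨fun h => h.2, fun h =>
        ⟨fun hb => h0' (by rw [hb, map_zero] at h; exact h.symm), h⟩⟩)
    rw [Nat.card_congr e1, Nat.card_congr e2, fib r c, fib r' c', hker]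

end Aux4
/-- if `ξ ∼ η`, then `φ_{ξ,η} : (Γ_ξ, ξ) → (Γ_η, η)` is an isomorphism of
rooted, undirected, unlabeled graphs: it maps `Cof(ξ)` bijectively onto `Cof(η)`, sends
the root `ξ` to the root `η`, and preserves edge multiplicities. -/
theorem phiMap_isomorphism (d m : ℕ) (hd : 3 ≤ d) (hm : 1 ≤ m)
    (ω : ℕ → ((Fin m → ZMod d) →+ ZMod d)) (hω : InOmega d m ω)
    (ξ η : Bd d) (hcomp : Compatible d ξ η) :
    Set.BijOn (phiMap d ξ η) (Cof ξ) (Cof η) ∧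
    phiMap d ξ η ξ = η ∧
    (∀ u ∈ Cof ξ, ∀ v ∈ Cof ξ,
      mult d m ω u v = mult d m ω (phiMap d ξ η u) (phiMap d ξ η v)) := by
  classical
  have hmapsto : Set.MapsTo (phiMap d ξ η) (Cof ξ) (Cof η) := fun u hu => phi_cofinal hu
  have hmapsto' : Set.MapsTo (phiMap d η ξ) (Cof η) (Cof ξ) := fun u hu => phi_cofinal hu
  have hinvon : Set.InvOn (phiMap d η ξ) (phiMap d ξ η) (Cof ξ) (Cof η) :=
    ⟨fun u hu => phi_inverse hu, fun w hw => phi_inverse hw⟩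
  refine ⟨hinvon.bijOn hmapsto hmapsto', phi_root ξ η, fun u hu v hv => ?_⟩
  have hinj : phiMap d ξ η u = phiMap d ξ η v → u = v := fun hc => by
    rw [← phi_inverse hu, ← phi_inverse hv, hc]
  rw [mult_eq hd hω u v, mult_eq hd hω (phiMap d ξ η u) (phiMap d ξ η v)]
  have hAcond : ((∀ n, 1 ≤ n → u n = v n) ∧ u 0 ≠ v 0) ↔
      ((∀ n, 1 ≤ n → phiMap d ξ η u n = phiMap d ξ η v n) ∧
        phiMap d ξ η u 0 ≠ phiMap d ξ η v 0) := by
    constructor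
    · rintro ⟨h1, h2⟩
      have h := key hd hcomp hu hv h2 (fun n hn => h1 n (by omega)) (Or.inl rfl)
      exact ⟨fun n hn => h.1 n (by omega), h.2⟩
    · rintro ⟨h1, h2⟩
      have h := key hd hcomp.symm (phi_cofinal hu) (phi_cofinal hv) h2
        (fun n hn => h1 n (by omega)) (Or.inl rfl)
      rw [phi_inverse hu, phi_inverse hv] at h
      exact ⟨fun n hn => h.1 n (by omega), h.2⟩
  congr 1
  · exact if_congr hAcond rfl rfl
  · by_cases hact : ∃ r, ActiveAt d u r
    · obtain ⟨r, hr⟩ := hact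
      have hr' : ActiveAt d (phiMap d ξ η u) r := active_transfer hd hcomp hu hr
      have hpre : (r + 1 = 0) ∨ (1 ≤ r + 1 ∧ (∀ i, i < r + 1 - 1 → u i = (d : ZMod d) - 1)
          ∧ u (r + 1 - 1) = 0) :=
        Or.inr ⟨by omega, by simpa using hr.1, by simpa using hr.2⟩
      have hpreφ : (r + 1 = 0) ∨ (1 ≤ r + 1 ∧
          (∀ i, i < r + 1 - 1 → phiMap d ξ η u i = (d : ZMod d) - 1)
          ∧ phiMap d ξ η u (r + 1 - 1) = 0) :=
        Or.inr ⟨by omega, by simpa using hr'.1, by simpa using hr'.2⟩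
      by_cases hag : ∀ n, n ≠ r + 1 → u n = v n
      · by_cases hval : u (r + 1) = v (r + 1)
        · have huv : u = v := funext fun n => by
            by_cases hn : n = r + 1
            · rw [hn]; exact hval
            · exact hag n hn
          subst huv
          have key1 : ∀ b : Fin m → ZMod d, bMap d m ω b u = u ↔ ω r b = 0 := fun b =>
            (bMap_eq_iff hd hr b).trans
              ⟨fun h => by rw [h.2, sub_self], fun h => ⟨fun n _ => rfl, by rw [h, sub_self]⟩⟩
          have key2 : ∀ b : Fin m → ZMod d,
              bMap d m ω b (phiMap d ξ η u) = phiMap d ξ η u ↔ ω r b = 0 := fun b =>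
            (bMap_eq_iff hd hr' b).trans
              ⟨fun h => by rw [h.2, sub_self], fun h => ⟨fun n _ => rfl, by rw [h, sub_self]⟩⟩
          have e1 : Nat.card {b : Fin m → ZMod d // b ≠ 0 ∧ bMap d m ω b u = u}
              = Nat.card {b : Fin m → ZMod d // b ≠ 0 ∧ ω r b = 0} :=
            Nat.card_congr (Equiv.subtypeEquivRight fun b =>
              and_congr_right fun _ => key1 b)
          have e2 : Nat.card {b : Fin m → ZMod d // b ≠ 0 ∧
                bMap d m ω b (phiMap d ξ η u) = phiMap d ξ η u}
              = Nat.card {b : Fin m → ZMod d // b ≠ 0 ∧ ω r b = 0} :=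
            Nat.card_congr (Equiv.subtypeEquivRight fun b =>
              and_congr_right fun _ => key2 b)
          rw [e1, e2]
        · have hk := key hd hcomp hu hv hval hag hpre
          have e1 : Nat.card {b : Fin m → ZMod d // b ≠ 0 ∧ bMap d m ω b u = v}
              = Nat.card {b : Fin m → ZMod d // b ≠ 0 ∧
                  ω r b = v (r + 1) - u (r + 1)} :=
            Nat.card_congr (Equiv.subtypeEquivRight fun b =>
              and_congr_right fun _ =>
                (bMap_eq_iff hd hr b).trans ⟨fun h => h.2, fun h => ⟨hag, h⟩⟩)
          have e2 : Nat.card {b : Fin m → ZMod d // b ≠ 0 ∧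
                  bMap d m ω b (phiMap d ξ η u) = phiMap d ξ η v}
              = Nat.card {b : Fin m → ZMod d // b ≠ 0 ∧
                  ω r b = phiMap d ξ η v (r + 1) - phiMap d ξ η u (r + 1)} :=
            Nat.card_congr (Equiv.subtypeEquivRight fun b =>
              and_congr_right fun _ =>
                (bMap_eq_iff hd hr' b).trans ⟨fun h => h.2, fun h => ⟨hk.1, h⟩⟩)
          rw [e1, e2]
          exact fiber_card hd hω r r _ _
            (iff_of_false (sub_ne_zero.mpr (Ne.symm hval)) (sub_ne_zero.mpr (Ne.symm hk.2)))
      · have hagφ : ¬ ∀ n, n ≠ r + 1 → phiMap d ξ η u n = phiMap d ξ η v n := by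
          intro hφ
          apply hag
          by_cases hvalφ : phiMap d ξ η u (r + 1) = phiMap d ξ η v (r + 1)
          · have heq : phiMap d ξ η u = phiMap d ξ η v := funext fun n => by
              by_cases hn : n = r + 1
              · rw [hn]; exact hvalφ
              · exact hφ n hn
            have := hinj heq
            intro n _
            rw [this]
          · have hk := key hd hcomp.symm (phi_cofinal hu) (phi_cofinal hv) hvalφ hφ hpreφ
            rw [phi_inverse hu, phi_inverse hv] at hk
            exact hk.1
        haveI i1 : IsEmpty {b : Fin m → ZMod d // b ≠ 0 ∧ bMap d m ω b u = v} :=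
          ⟨fun ⟨b, _, h2⟩ => hag ((bMap_eq_iff hd hr b).mp h2).1⟩
        haveI i2 : IsEmpty {b : Fin m → ZMod d // b ≠ 0 ∧
            bMap d m ω b (phiMap d ξ η u) = phiMap d ξ η v} :=
          ⟨fun ⟨b, _, h2⟩ => hagφ ((bMap_eq_iff hd hr' b).mp h2).1⟩
        rw [Nat.card_of_isEmpty, Nat.card_of_isEmpty]
    · push_neg at hact
      have hactφ : ∀ r, ¬ ActiveAt d (phiMap d ξ η u) r := fun r h =>
        hact r ((active_transfer_iff hd hcomp hu r).mpr h)
      by_cases huv : u = v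
      · have hφuv : phiMap d ξ η u = phiMap d ξ η v := by rw [huv]
        have e1 : Nat.card {b : Fin m → ZMod d // b ≠ 0 ∧ bMap d m ω b u = v}
            = Nat.card {b : Fin m → ZMod d // b ≠ 0} :=
          Nat.card_congr (Equiv.subtypeEquivRight fun b =>
            ⟨fun h => h.1, fun h => ⟨h, by rw [bMap_apply_inactive hact b]; exact huv⟩⟩)
        have e2 : Nat.card {b : Fin m → ZMod d // b ≠ 0 ∧
              bMap d m ω b (phiMap d ξ η u) = phiMap d ξ η v}
            = Nat.card {b : Fin m → ZMod d // b ≠ 0} :=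
          Nat.card_congr (Equiv.subtypeEquivRight fun b =>
            ⟨fun h => h.1, fun h => ⟨h, by rw [bMap_apply_inactive hactφ b]; exact hφuv⟩⟩)
        rw [e1, e2]
      · have hφuv : phiMap d ξ η u ≠ phiMap d ξ η v := fun hc => huv (hinj hc)
        haveI i1 : IsEmpty {b : Fin m → ZMod d // b ≠ 0 ∧ bMap d m ω b u = v} :=
          ⟨fun ⟨b, _, h2⟩ => huv (by rw [← bMap_apply_inactive hact b (ω := ω)]; exact h2)⟩
        haveI i2 : IsEmpty {b : Fin m → ZMod d // b ≠ 0 ∧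
            bMap d m ω b (phiMap d ξ η u) = phiMap d ξ η v} :=
          ⟨fun ⟨b, _, h2⟩ => hφuv (by rw [← bMap_apply_inactive hactφ b (ω := ω)]; exact h2)⟩
        rw [Nat.card_of_isEmpty, Nat.card_of_isEmpty]


end
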